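/- Let n ≥ 1 and let k be an integer with 0 ≤ k ≤ n, f = k/n, and 0 < ε₁ ≤ ε₂; set ε̄ = f ε₁ + (1−f) ε₂. Then the minimax risk satisfies L(ε₁,ε₂,n,f) ≥ (1/16) · min{ 1/(16 n² ε̄²), 1/4 }. -/

import Mathlib

open MeasureTheory ProbabilityTheory Real

noncomputable section

abbrev UnitI : Set ℝ := Set.Icc (-(1:ℝ)/2) (1/2)

abbrev Dataset (n : ℕ) : Type := Fin n → UnitI

def INeighbor {n : ℕ} (i : Fin n) (x x' : Dataset n) : Prop :=
  ∀ j : Fin n, j ≠ i → x j = x' j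

def IsDP {n : ℕ} {Y : Type} [MeasurableSpace Y]
    (ε : Fin n → ℝ) (M : Kernel (Dataset n) Y) : Prop :=
  ∀ i : Fin n, ∀ x x' : Dataset n, INeighbor i x x' →
    ∀ S : Set Y, MeasurableSet S →
      M x S ≤ ENNReal.ofReal (Real.exp (ε i)) * M x' S

def meanOf (P : Measure UnitI) : ℝ := ∫ z, (z : ℝ) ∂P

def errOf {n : ℕ} (M : Kernel (Dataset n) UnitI) (P : Measure UnitI) : ℝ :=
  ∫ x, (∫ y, ((y : ℝ) - meanOf P)^2 ∂(M x)) ∂(Measure.pi fun _ : Fin n => P)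

def wcError {n : ℕ} (M : Kernel (Dataset n) UnitI) : ℝ :=
  ⨆ P : {P : Measure UnitI // IsProbabilityMeasure P}, errOf M P.1

def minimaxRisk (n : ℕ) (ε : Fin n → ℝ) : ℝ :=
  ⨅ M : {M : Kernel (Dataset n) UnitI // IsMarkovKernel M ∧ IsDP ε M}, wcError M.1

def twoGroup (n k : ℕ) (ε₁ ε₂ : ℝ) : Fin n → ℝ :=
  fun i => if (i : ℕ) < k then ε₁ else ε₂

/-!
Le Cam's two-point method. Let `P±` put mass `1 - p` at `0` and mass `p` at `±1/2`, so that their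
means `±p/2` are `p` apart. Sample both product measures through the same Bernoulli pattern
`t ∈ {0,1}ⁿ` of nonzero coordinates: the two datasets differ only where `tᵢ = 1`, so by group
privacy no test (here: "the output is `≥ 0`") separates them with total error below
`exp (-∑_{tᵢ = 1} εᵢ)`, and each testing error costs `(p/2)²` of squared error. Averaging over `t`
gives `∏ᵢ (1 - p + p e^{-εᵢ}) ≥ exp (-p ∑ εᵢ) ≥ 1/2` as soon as `p ∑ εᵢ ≤ 1/2`, so one of the two
priors forces error `≥ p²/16`; finally `∑ εᵢ = n ε̄` and `p = min (1/(4 n ε̄)) (1/2)`.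
-/

open scoped unitInterval

namespace IsDP

variable {n : ℕ} {Y : Type} [MeasurableSpace Y] {ε : Fin n → ℝ} {M : Kernel (Dataset n) Y}

theorem apply_le_exp_sum_mul (hM : IsDP ε M) (T : Finset (Fin n)) {x x' : Dataset n}
    (hxx' : ∀ j ∉ T, x j = x' j) {S : Set Y} (hS : MeasurableSet S) :
    M x S ≤ ENNReal.ofReal (exp (∑ i ∈ T, ε i)) * M x' S := by
  classical
  induction T using Finset.induction_on generalizing x x' with
  | empty => simp [funext fun j => hxx' j (Finset.notMem_empty j)]
  | insert i T hi ih =>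
    set x'' := Function.update x' i (x i)
    have hx'' : M x S ≤ ENNReal.ofReal (exp (∑ j ∈ T, ε j)) * M x'' S := by
      refine ih fun j hj => ?_
      by_cases hji : j = i
      · simp [x'', hji]
      · simp [x'', hji, hxx' j (by simp [hji, hj])]
    have hx' : M x'' S ≤ ENNReal.ofReal (exp (ε i)) * M x' S :=
      hM i x'' x' (fun j hj => Function.update_of_ne hj _ _) S hS
    calc M x S ≤ ENNReal.ofReal (exp (∑ j ∈ T, ε j)) * (ENNReal.ofReal (exp (ε i)) * M x' S) :=
          hx''.trans (mul_le_mul_right hx' _)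
      _ = ENNReal.ofReal (exp (∑ j ∈ insert i T, ε j)) * M x' S := by
          rw [← mul_assoc, ← ENNReal.ofReal_mul (exp_nonneg _), ← exp_add,
            Finset.sum_insert hi, add_comm (ε i)]

theorem exp_neg_sum_le_measureReal_add_compl [IsMarkovKernel M] (hM : IsDP ε M)
    (hε : ∀ i, 0 ≤ ε i) (T : Finset (Fin n)) {x x' : Dataset n}
    (hxx' : ∀ j ∉ T, x j = x' j) {S : Set Y} (hS : MeasurableSet S) :
    exp (-∑ i ∈ T, ε i) ≤ (M x).real S + (M x').real Sᶜ := by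
  set E := ∑ i ∈ T, ε i
  have hcompl : (M x).real Sᶜ ≤ exp E * (M x').real Sᶜ := by
    have := ENNReal.toReal_mono (by finiteness) (hM.apply_le_exp_sum_mul T hxx' hS.compl)
    rwa [ENNReal.toReal_mul, ENNReal.toReal_ofReal (exp_nonneg _)] at this
  rw [probReal_compl_eq_one_sub hS] at hcompl
  have hE : exp (-E) ≤ 1 := exp_le_one_iff.2 (neg_nonpos.2 (Finset.sum_nonneg fun i _ => hε i))
  have hinv : exp (-E) * exp E = 1 := by rw [← exp_add, neg_add_cancel, exp_zero]
  nlinarith [measureReal_nonneg (μ := M x) (s := S), measureReal_nonneg (μ := M x') (s := Sᶜ),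
    exp_pos (-E)]

end IsDP

theorem pi_bernoulliMeasure_eq_map {ι X : Type*} [Fintype ι] [MeasurableSpace X]
    [MeasurableSingletonClass X] (a b : X) (p : I) :
    Measure.pi (fun _ : ι => Ber(a, b, p)) =
      (Measure.pi fun _ : ι => Ber(true, false, p)).map fun t i => cond (t i) a b := by
  have hmap : Ber(true, false, p).map (fun c => cond c a b) = Ber(a, b, p) :=
    map_bernoulliMeasure _ _ _ p
  rw [Measure.pi_map_pi (f := fun _ c => cond c a b)
    fun _ => (measurable_of_finite _).aemeasurable]
  simp only [hmap]

theorem meanOf_bernoulliMeasure (a b : UnitI) (p : I) :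
    meanOf Ber(a, b, p) = p * a + (1 - p) * b := by
  simp [meanOf, integral_bernoulliMeasure]

theorem errOf_bernoulliMeasure {n : ℕ} (M : Kernel (Dataset n) UnitI) (a b : UnitI) (p : I) :
    errOf M Ber(a, b, p) = ∫ t, ∫ y, ((y : ℝ) - meanOf Ber(a, b, p)) ^ 2
      ∂M (fun i => cond (t i) a b) ∂(Measure.pi fun _ => Ber(true, false, p)) := by
  rw [errOf, pi_bernoulliMeasure_eq_map, integral_map (measurable_of_finite _).aemeasurable]
  exact (((measurable_subtype_coe.sub_const _).pow_const 2).stronglyMeasurable.integral_kernel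
    (κ := M)).aestronglyMeasurable

theorem abs_meanOf_le (P : Measure UnitI) [IsProbabilityMeasure P] : |meanOf P| ≤ 1 / 2 := by
  have h := norm_integral_le_of_norm_le_const (μ := P) (C := 1 / 2)
    (f := fun z : UnitI => (z : ℝ)) (ae_of_all _ fun z => abs_le.2 ⟨by linarith [z.2.1], z.2.2⟩)
  rwa [probReal_univ, mul_one] at h

theorem sq_sub_meanOf_le_one (P : Measure UnitI) [IsProbabilityMeasure P] (y : UnitI) :
    ((y : ℝ) - meanOf P) ^ 2 ≤ 1 := by
  have := abs_le.1 (abs_meanOf_le P)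
  nlinarith [y.2.1, y.2.2]

theorem errOf_le_one {n : ℕ} (M : Kernel (Dataset n) UnitI) [IsMarkovKernel M]
    (P : Measure UnitI) [IsProbabilityMeasure P] : errOf M P ≤ 1 := by
  have hinner (x : Dataset n) : ‖∫ y, ((y : ℝ) - meanOf P) ^ 2 ∂M x‖ ≤ 1 := by
    have h := norm_integral_le_of_norm_le_const (μ := M x) (C := 1) <| ae_of_all _ fun y =>
      (Real.norm_of_nonneg (sq_nonneg _)).trans_le (sq_sub_meanOf_le_one P y)
    rwa [probReal_univ, mul_one] at h
  have h := norm_integral_le_of_norm_le_const (C := 1) (ae_of_all (Measure.pi fun _ => P) hinner)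
  rw [probReal_univ, mul_one] at h
  exact (le_abs_self _).trans h

theorem errOf_le_wcError {n : ℕ} (M : Kernel (Dataset n) UnitI) [IsMarkovKernel M]
    (P : Measure UnitI) [hP : IsProbabilityMeasure P] : errOf M P ≤ wcError M :=
  le_ciSup (f := fun P : {P : Measure UnitI // IsProbabilityMeasure P} => errOf M P.1)
    ⟨1, by rintro _ ⟨P, rfl⟩; exact @errOf_le_one _ M _ P.1 P.2⟩ ⟨P, hP⟩

theorem mul_measureReal_le_integral_sq_sub (ν : Measure UnitI) [IsFiniteMeasure ν] (m : ℝ)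
    {c : ℝ} (hc : 0 ≤ c) {B : Set UnitI} (hB : ∀ y ∈ B, c ≤ ((y : ℝ) - m) ^ 2) :
    c * ν.real B ≤ ∫ y, ((y : ℝ) - m) ^ 2 ∂ν := by
  have hint : Integrable (fun y : UnitI => ((y : ℝ) - m) ^ 2) ν :=
    (by fun_prop : Continuous fun y : UnitI => ((y : ℝ) - m) ^ 2).integrable_of_hasCompactSupport
      (HasCompactSupport.of_compactSpace _)
  calc c * ν.real B ≤ c * ν.real {y | c ≤ ((y : ℝ) - m) ^ 2} :=
        mul_le_mul_of_nonneg_left (measureReal_mono hB) hc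
    _ ≤ _ := mul_meas_ge_le_integral_of_nonneg (ae_of_all _ fun _ => sq_nonneg _) hint c

theorem IsDP.sq_mul_exp_neg_sum_le_integral_add_integral {n : ℕ} {ε : Fin n → ℝ}
    {M : Kernel (Dataset n) UnitI} [IsMarkovKernel M] (hM : IsDP ε M) (hε : ∀ i, 0 ≤ ε i)
    (T : Finset (Fin n)) {x x' : Dataset n} (hxx' : ∀ j ∉ T, x j = x' j) {m : ℝ} (hm : 0 ≤ m) :
    m ^ 2 * exp (-∑ i ∈ T, ε i) ≤
      ∫ y, ((y : ℝ) - -m) ^ 2 ∂M x + ∫ y, ((y : ℝ) - m) ^ 2 ∂M x' := by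
  set S : Set UnitI := {y | 0 ≤ (y : ℝ)}
  have hS : MeasurableSet S := measurable_subtype_coe measurableSet_Ici
  have hx := mul_measureReal_le_integral_sq_sub (M x) (-m) (sq_nonneg m) (B := S)
    fun y (hy : 0 ≤ (y : ℝ)) => by nlinarith
  have hx' := mul_measureReal_le_integral_sq_sub (M x') m (sq_nonneg m) (B := Sᶜ)
    fun y (hy : ¬ 0 ≤ (y : ℝ)) => by nlinarith
  have htest := hM.exp_neg_sum_le_measureReal_add_compl hε T hxx' hS
  nlinarith [sq_nonneg m]

def zeroPt : UnitI := ⟨0, by norm_num⟩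
def leftEnd : UnitI := ⟨-1 / 2, by norm_num⟩
def rightEnd : UnitI := ⟨1 / 2, by norm_num⟩

theorem IsDP.sq_mul_prod_le_errOf_add_errOf {n : ℕ} {ε : Fin n → ℝ}
    {M : Kernel (Dataset n) UnitI} [IsMarkovKernel M] (hM : IsDP ε M) (hε : ∀ i, 0 ≤ ε i)
    (p : I) :
    (p / 2 : ℝ) ^ 2 * ∏ i, (p * exp (-ε i) + (1 - p)) ≤
      errOf M Ber(leftEnd, zeroPt, p) + errOf M Ber(rightEnd, zeroPt, p) := by
  have hmean (a : UnitI) : meanOf Ber(a, zeroPt, p) = p * a := by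
    simp [meanOf_bernoulliMeasure, zeroPt]
  have hpoint (t : Fin n → Bool) : (p / 2 : ℝ) ^ 2 * ∏ i, exp (-cond (t i) (ε i) 0) ≤
      ∫ y, ((y : ℝ) - meanOf Ber(leftEnd, zeroPt, p)) ^ 2
        ∂M (fun i => cond (t i) leftEnd zeroPt) +
      ∫ y, ((y : ℝ) - meanOf Ber(rightEnd, zeroPt, p)) ^ 2
        ∂M (fun i => cond (t i) rightEnd zeroPt) := by
    have hT : ∏ i, exp (-cond (t i) (ε i) 0) =
        exp (-∑ i ∈ Finset.univ.filter (t · = true), ε i) := by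
      rw [Finset.sum_filter, ← Finset.sum_neg_distrib, exp_sum]
      refine Finset.prod_congr rfl fun i _ => ?_
      cases t i <;> rfl
    have hagree (j) (hj : j ∉ Finset.univ.filter (t · = true)) :
        cond (t j) leftEnd zeroPt = cond (t j) rightEnd zeroPt := by
      simp_all
    rw [hT, hmean, hmean, show (p * leftEnd : ℝ) = -(p / 2) by simp [leftEnd]; ring,
      show (p * rightEnd : ℝ) = p / 2 by simp [rightEnd]; ring]
    exact hM.sq_mul_exp_neg_sum_le_integral_add_integral hε _ hagree
      (by linarith [unitInterval.nonneg p])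
  rw [errOf_bernoulliMeasure, errOf_bernoulliMeasure, ← integral_add .of_finite .of_finite]
  calc (p / 2 : ℝ) ^ 2 * ∏ i, (p * exp (-ε i) + (1 - p))
      = ∫ t, (p / 2 : ℝ) ^ 2 * ∏ i, exp (-cond (t i) (ε i) 0)
          ∂(Measure.pi fun _ => Ber(true, false, p)) := by
        rw [integral_const_mul, integral_fintype_prod_eq_prod fun i b => exp (-cond b (ε i) 0)]
        simp [integral_bernoulliMeasure]
    _ ≤ _ := integral_mono .of_finite .of_finite hpoint

theorem exp_neg_mul_sum_le_prod {ι : Type*} (s : Finset ι) (ε : ι → ℝ) {p : ℝ} (hp₀ : 0 ≤ p)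
    (hp₁ : p ≤ 1) : exp (-(p * ∑ i ∈ s, ε i)) ≤ ∏ i ∈ s, (p * exp (-ε i) + (1 - p)) := by
  rw [Finset.mul_sum, ← Finset.sum_neg_distrib, exp_sum]
  refine Finset.prod_le_prod (fun i _ => (exp_pos _).le) fun i _ => ?_
  have h := convexOn_exp.2 (Set.mem_univ (-ε i)) (Set.mem_univ 0) hp₀ (sub_nonneg.2 hp₁)
    (by ring)
  simpa [mul_neg] using h

theorem IsDP.sq_div_sixteen_le_wcError {n : ℕ} {ε : Fin n → ℝ} {M : Kernel (Dataset n) UnitI}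
    [IsMarkovKernel M] (hM : IsDP ε M) (hε : ∀ i, 0 ≤ ε i) (p : I)
    (hp : p * ∑ i, ε i ≤ 1 / 2) : (p : ℝ) ^ 2 / 16 ≤ wcError M := by
  have hhalf : 1 / 2 ≤ ∏ i, (p * exp (-ε i) + (1 - p)) :=
    calc (1 : ℝ) / 2 ≤ exp (-(1 / 2)) := by linarith [add_one_le_exp (-(1 / 2) : ℝ)]
      _ ≤ exp (-(p * ∑ i, ε i)) := exp_le_exp.2 (neg_le_neg hp)
      _ ≤ _ := exp_neg_mul_sum_le_prod _ ε (unitInterval.nonneg p) (unitInterval.le_one p)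
  have herr := hM.sq_mul_prod_le_errOf_add_errOf hε p
  have hleft := errOf_le_wcError M Ber(leftEnd, zeroPt, p)
  have hright := errOf_le_wcError M Ber(rightEnd, zeroPt, p)
  nlinarith [sq_nonneg (p : ℝ)]

theorem sq_div_sixteen_le_minimaxRisk {n : ℕ} {ε : Fin n → ℝ} (hε : ∀ i, 0 ≤ ε i) (p : I)
    (hp : p * ∑ i, ε i ≤ 1 / 2) : (p : ℝ) ^ 2 / 16 ≤ minimaxRisk n ε := by
  have hconst : IsDP ε (Kernel.const (Dataset n) (Measure.dirac zeroPt)) :=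
    fun i _ _ _ S _ => le_mul_of_one_le_left zero_le (by simpa using hε i)
  have : Nonempty {M : Kernel (Dataset n) UnitI // IsMarkovKernel M ∧ IsDP ε M} :=
    ⟨⟨_, inferInstance, hconst⟩⟩
  exact le_ciInf fun ⟨M, _, hM⟩ => hM.sq_div_sixteen_le_wcError hε p hp

theorem sum_twoGroup {n k : ℕ} (hkn : k ≤ n) (ε₁ ε₂ : ℝ) :
    ∑ i, twoGroup n k ε₁ ε₂ i = k * ε₁ + (n - k) * ε₂ := by
  unfold twoGroup
  rw [Fin.sum_univ_eq_sum_range (fun i => if i < k then ε₁ else ε₂),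
    ← Finset.sum_range_add_sum_Ico _ hkn,
    Finset.sum_congr rfl fun i hi => if_pos (Finset.mem_range.1 hi),
    Finset.sum_congr rfl fun i hi => if_neg (not_lt.2 (Finset.mem_Ico.1 hi).1)]
  simp [Nat.cast_sub hkn]

theorem exists_mul_le_half_and_min_le_sq {s : ℝ} (hs : 0 ≤ s) :
    ∃ p : I, p * s ≤ 1 / 2 ∧ min (1 / (16 * s ^ 2)) (1 / 4) ≤ (p : ℝ) ^ 2 := by
  set q := min (1 / (4 * s)) (1 / 2)
  have hq₀ : 0 ≤ q := le_min (by positivity) (by norm_num)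
  have hq₁ : q ≤ 1 / 2 := min_le_right _ _
  refine ⟨⟨q, hq₀, hq₁.trans (by norm_num)⟩, ?_, ?_⟩
  · rcases hs.eq_or_lt with rfl | hs
    · simp
    · calc q * s ≤ 1 / (4 * s) * s := mul_le_mul_of_nonneg_right (min_le_left _ _) hs.le
        _ ≤ 1 / 2 := by field_simp; norm_num
  · rcases min_choice (1 / (4 * s)) (1 / 2) with h | h
    · exact (min_le_left _ _).trans_eq (by simp only [q, h]; ring)
    · exact (min_le_right _ _).trans_eq (by simp only [q, h]; norm_num)

theorem minimax_lower_bound_third_general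
    (n k : ℕ) (hkn : k ≤ n)
    (ε₁ ε₂ f εbar : ℝ) (hε₁ : 0 < ε₁) (hε₁₂ : ε₁ ≤ ε₂)
    (hf : f = (k : ℝ) / n)
    (hεbar : εbar = f * ε₁ + (1 - f) * ε₂) :
    (1 / 16) * min (1 / (16 * n ^ 2 * εbar ^ 2)) (1 / 4)
      ≤ minimaxRisk n (twoGroup n k ε₁ ε₂) := by
  have hε : ∀ i, 0 ≤ twoGroup n k ε₁ ε₂ i := fun i => by
    unfold twoGroup; split_ifs <;> linarith
  have hf₀ : 0 ≤ f := hf ▸ by positivity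
  have hf₁ : f ≤ 1 := hf ▸ div_le_one_of_le₀ (by exact_mod_cast hkn) (Nat.cast_nonneg n)
  have hnf : (n : ℝ) * f = k := by
    rcases n.eq_zero_or_pos with rfl | hn
    · simp [Nat.le_zero.1 hkn]
    · rw [hf, mul_div_cancel₀ _ (by positivity)]
  have hsum : ∑ i, twoGroup n k ε₁ ε₂ i = n * εbar := by
    rw [sum_twoGroup hkn, hεbar, ← hnf]; ring
  have hεbar₀ : 0 ≤ εbar := hεbar ▸ by nlinarith
  obtain ⟨p, hps, hp⟩ := exists_mul_le_half_and_min_le_sq (mul_nonneg (Nat.cast_nonneg n) hεbar₀)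
  have hrisk := sq_div_sixteen_le_minimaxRisk hε p (hsum ▸ hps)
  rw [mul_pow, ← mul_assoc] at hp
  linarith

theorem minimax_lower_bound_third
    (n k : ℕ) (hn : 1 ≤ n) (hkn : k ≤ n)
    (ε₁ ε₂ f εbar : ℝ) (hε₁ : 0 < ε₁) (hε₁₂ : ε₁ ≤ ε₂)
    (hf : f = (k : ℝ) / n)
    (hεbar : εbar = f * ε₁ + (1 - f) * ε₂) :
    (1 / 16) * min (1 / (16 * n ^ 2 * εbar ^ 2)) (1 / 4)
      ≤ minimaxRisk n (twoGroup n k ε₁ ε₂) :=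
  minimax_lower_bound_third_general n k hkn ε₁ ε₂ f εbar hε₁ hε₁₂ hf hεbar
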